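/- arXiv:1203.6870 — 2 statements merged into one kernel-verified Lean document; each statement's English description precedes it below -/
import Mathlib

section
/- Let R be a discrete valuation ring with fraction field K and uniformizer π, let u ∈ Rˣ be a unit, and let n ≥ 1 be an integer. Let L = K[X]/(X^n − u·π) and let T denote the image of X in L. Then for every integer q with 0 ≤ q < n and every c ∈ K, if the element c·T^q of L is integral over R, then c ∈ R. -/
/-!
Raising `c T^q` to the `n`-th power gives `c^n (uπ)^q ∈ K`, which is integral over the
integrally closed `R`, hence lies in `R`. If `c ∉ R` then `c⁻¹ = s` lies in the maximal
ideal `(π)`, and `x s^n = (uπ)^q` makes `π^n` divide `π^q`, impossible since `q < n`.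
-/

open Polynomial

section AdjoinRoot

variable {R K : Type*} [Field K] {n : ℕ} {a : K}

lemma AdjoinRoot.nontrivial_X_pow_sub_C (hn : 0 < n) : Nontrivial (AdjoinRoot (X ^ n - C a)) :=
  AdjoinRoot.nontrivial _ (by rw [degree_X_pow_sub_C hn]; exact_mod_cast hn.ne')

lemma AdjoinRoot.mul_root_X_pow_sub_C_pow_pow (c : K) (q : ℕ) :
    (algebraMap K (AdjoinRoot (X ^ n - C a)) c * root (X ^ n - C a) ^ q) ^ n =
      algebraMap K _ (c ^ n * a ^ q) := by
  rw [mul_pow, ← pow_mul, mul_comm q n, pow_mul, root_X_pow_sub_C_pow,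
    ← algebraMap_eq, ← map_pow, ← map_pow, ← map_mul]

lemma AdjoinRoot.isIntegral_pow_mul_pow_of_isIntegral_mul_root_pow [CommRing R] [Algebra R K]
    (hn : 0 < n) {c : K} {q : ℕ}
    (h : IsIntegral R (algebraMap K (AdjoinRoot (X ^ n - C a)) c * root (X ^ n - C a) ^ q)) :
    IsIntegral R (c ^ n * a ^ q) := by
  have := nontrivial_X_pow_sub_C (a := a) hn
  rw [← isIntegral_algebraMap_iff (algebraMap K (AdjoinRoot (X ^ n - C a))).injective,
    ← mul_root_X_pow_sub_C_pow_pow]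
  exact h.pow n

end AdjoinRoot

lemma IsDiscreteValuationRing.isInteger_of_pow_mul_unit_mul_uniformizer_pow
    {R K : Type*} [CommRing R] [IsDomain R] [IsDiscreteValuationRing R]
    [Field K] [Algebra R K] [IsFractionRing R K]
    {π : R} (hπ : Irreducible π) (u : Rˣ) {n q : ℕ} (hq : q < n) {c : K} {x : R}
    (hx : algebraMap R K x = c ^ n * algebraMap R K ((u : R) * π) ^ q) :
    IsLocalization.IsInteger R c := by
  rcases eq_or_ne c 0 with rfl | hc0
  · exact ⟨0, map_zero _⟩
  rcases ValuationRing.isInteger_or_isInteger R c with hc | ⟨s, hs⟩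
  · exact hc
  by_cases hs_unit : IsUnit s
  · obtain ⟨w, rfl⟩ := hs_unit
    exact ⟨(w⁻¹ : Rˣ), by rw [map_units_inv, hs, inv_inv]⟩
  exfalso
  have hπs : π ∣ s := by
    rw [← Ideal.mem_span_singleton, ← (irreducible_iff_uniformizer π).mp hπ]
    exact hs_unit
  have hrel : x * s ^ n = ((u : R) * π) ^ q := by
    apply IsFractionRing.injective R K
    rw [map_mul, hx, map_pow, map_pow, hs, inv_pow, mul_right_comm,
      mul_inv_cancel₀ (pow_ne_zero n hc0), one_mul]
  have hdvd : π ^ n ∣ π ^ q := by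
    rw [← (u ^ q).dvd_mul_left, Units.val_pow_eq_pow_val, ← mul_pow, ← hrel]
    exact (pow_dvd_pow_of_dvd hπs n).mul_left x
  exact hq.not_ge ((pow_dvd_pow_iff hπ.ne_zero hπ.not_isUnit).mp hdvd)

theorem stmt_0_general (R K : Type*) [CommRing R] [IsDomain R] [IsDiscreteValuationRing R]
    [Field K] [Algebra R K] [IsFractionRing R K]
    (π : R) (hπ : Irreducible π) (u : Rˣ) (n : ℕ)
    (q : ℕ) (hq : q < n) (c : K)
    (hint : IsIntegral R
      (algebraMap K (AdjoinRoot (X ^ n - C (algebraMap R K ((u : R) * π)))) c *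
        (AdjoinRoot.root (X ^ n - C (algebraMap R K ((u : R) * π)))) ^ q)) :
    ∃ r : R, algebraMap R K r = c := by
  obtain ⟨x, hx⟩ := IsIntegrallyClosed.isIntegral_iff.mp
    (AdjoinRoot.isIntegral_pow_mul_pow_of_isIntegral_mul_root_pow (by omega) hint)
  exact IsDiscreteValuationRing.isInteger_of_pow_mul_unit_mul_uniformizer_pow hπ u hq hx

/-- Let `R` be a discrete valuation ring with fraction field `K` and uniformizer `π`,
`u ∈ Rˣ` a unit, `n ≥ 1`. Let `L = K[X]/(X^n - u·π)` and let `T` denote the image of `X`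
in `L`. For every `q` with `0 ≤ q < n` and every `c ∈ K`, if the element `c·T^q` of `L`
is integral over `R`, then `c ∈ R` (i.e. `c` is in the image of `R → K`). -/
theorem stmt_0 (R K : Type*) [CommRing R] [IsDomain R] [IsDiscreteValuationRing R]
    [Field K] [Algebra R K] [IsFractionRing R K]
    (π : R) (hπ : Irreducible π) (u : Rˣ) (n : ℕ) (hn : 1 ≤ n)
    (q : ℕ) (hq : q < n) (c : K)
    (hint : IsIntegral R
      (algebraMap K (AdjoinRoot (X ^ n - C (algebraMap R K ((u : R) * π)))) c *
        (AdjoinRoot.root (X ^ n - C (algebraMap R K ((u : R) * π)))) ^ q)) :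
    ∃ r : R, algebraMap R K r = c :=
  stmt_0_general R K π hπ u n q hq c hint
end

section
/- Let R be a discrete valuation ring with fraction field K and uniformizer π, let u ∈ Rˣ be a unit, and let n ≥ 1 and r be integers with 0 ≤ r < n. Let L = K[X]/(X^n − u·π^r) and let T denote the image of X in L. Let A be an R-subalgebra of L that is finitely generated as an R-module. Then A ∩ T·K ⊆ T·R; that is, for every c ∈ K, if c·T ∈ A then c ∈ R. -/
open Polynomial

/-! Every element of `A` is integral over `R`, so if `c T ∈ A` then `(c T)^n = c^n u π^r` is
an element of `K` integral over `R`, hence lies in `R`. If `c ∉ R`, then `c⁻¹ = d` lies in the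
maximal ideal, and `u π^r = b d^n` would be divisible by `π^n`, impossible since `r < n`. -/

namespace AdjoinRoot

variable {K : Type*} [Field K] {n : ℕ} {a : K}

theorem root_X_pow_sub_C_pow :
    root (X ^ n - C a) ^ n = algebraMap K (AdjoinRoot (X ^ n - C a)) a := by
  have h := eval₂_root (X ^ n - C a)
  rwa [eval₂_sub, eval₂_X_pow, eval₂_C, sub_eq_zero] at h

theorem isIntegral_pow_mul_of_isIntegral_mul_root {R : Type*} [CommRing R] [Algebra R K]
    (hn : n ≠ 0) {c : K} (h : IsIntegral R (algebraMap K (AdjoinRoot (X ^ n - C a)) c * root _)) :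
    IsIntegral R (c ^ n * a) := by
  have hinj : Function.Injective (algebraMap K (AdjoinRoot (X ^ n - C a))) :=
    of.injective_of_degree_ne_zero <| by
      rw [degree_X_pow_sub_C (Nat.pos_of_ne_zero hn)]; exact_mod_cast hn
  rw [← isIntegral_algebraMap_iff hinj, map_mul, map_pow]
  simpa only [mul_pow, root_X_pow_sub_C_pow] using h.pow n

end AdjoinRoot

namespace IsDiscreteValuationRing

variable {R : Type*} [CommRing R] [IsDomain R] [IsDiscreteValuationRing R] {π : R}

theorem isUnit_of_mul_pow_eq_unit_mul_pow (hπ : Irreducible π) (u : Rˣ) {r n : ℕ} (hr : r < n)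
    {b d : R} (h : b * d ^ n = u * π ^ r) : IsUnit d := by
  by_contra hd
  have hπd : π ∣ d := by
    rw [← Ideal.mem_span_singleton, ← hπ.maximalIdeal_eq]; exact hd
  have : π ^ n ∣ π ^ r :=
    u.isUnit.dvd_mul_left.mp (h ▸ (pow_dvd_pow_of_dvd hπd n).mul_left b)
  exact absurd ((pow_dvd_pow_iff hπ.ne_zero hπ.not_isUnit).mp this) (not_le.mpr hr)

theorem isInteger_of_isIntegral_pow_mul {K : Type*} [Field K] [Algebra R K] [IsFractionRing R K]
    (hπ : Irreducible π) (u : Rˣ) {r n : ℕ} (hr : r < n) {c : K}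
    (h : IsIntegral R (c ^ n * algebraMap R K (u * π ^ r))) : IsLocalization.IsInteger R c := by
  obtain ⟨b, hb⟩ := IsIntegrallyClosed.isIntegral_iff.mp h
  rcases eq_or_ne c 0 with rfl | hc
  · exact ⟨0, map_zero _⟩
  rcases ValuationRing.isInteger_or_isInteger R c with hc' | ⟨d, hd⟩
  · exact hc'
  have hbd : b * d ^ n = u * π ^ r := IsFractionRing.injective R K <| by
    rw [map_mul, map_pow, hb, hd, inv_pow, mul_right_comm, mul_inv_cancel₀ (pow_ne_zero n hc),
      one_mul]
  obtain ⟨e, he⟩ := (isUnit_of_mul_pow_eq_unit_mul_pow hπ u hr hbd).exists_left_inv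
  refine ⟨e, ?_⟩
  rw [← inv_inv c, ← hd]
  exact eq_inv_of_mul_eq_one_left (by rw [← map_mul, he, map_one])

end IsDiscreteValuationRing

theorem stmt_1_general (R K : Type*) [CommRing R] [IsDomain R] [IsDiscreteValuationRing R]
    [Field K] [Algebra R K] [IsFractionRing R K]
    (π : R) (hπ : Irreducible π) (u : Rˣ) (n r : ℕ) (hr : r < n)
    (A : Subalgebra R (AdjoinRoot (X ^ n - C (algebraMap R K ((u : R) * π ^ r)))))
    (hA : A.toSubmodule.FG)
    (c : K)
    (hc : algebraMap K (AdjoinRoot (X ^ n - C (algebraMap R K ((u : R) * π ^ r)))) c *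
      AdjoinRoot.root (X ^ n - C (algebraMap R K ((u : R) * π ^ r))) ∈ A) :
    ∃ ρ : R, algebraMap R K ρ = c :=
  IsDiscreteValuationRing.isInteger_of_isIntegral_pow_mul hπ u hr <|
    AdjoinRoot.isIntegral_pow_mul_of_isIntegral_mul_root (by omega) <|
      IsIntegral.of_mem_of_fg A hA _ hc

/-- Let `R` be a discrete valuation ring with fraction field `K` and uniformizer `π`,
`u ∈ Rˣ` a unit, and `n ≥ 1`, `0 ≤ r < n` integers. Let `L = K[X]/(X^n - u·π^r)` and
let `T` denote the image of `X` in `L`. Let `A` be an `R`-subalgebra of `L` that is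
finitely generated as an `R`-module. Then `A ∩ T·K ⊆ T·R`: for every `c ∈ K`,
if `c·T ∈ A` then `c ∈ R`. -/
theorem stmt_1 (R K : Type*) [CommRing R] [IsDomain R] [IsDiscreteValuationRing R]
    [Field K] [Algebra R K] [IsFractionRing R K]
    (π : R) (hπ : Irreducible π) (u : Rˣ) (n r : ℕ) (hn : 1 ≤ n) (hr : r < n)
    (A : Subalgebra R (AdjoinRoot (X ^ n - C (algebraMap R K ((u : R) * π ^ r)))))
    (hA : A.toSubmodule.FG)
    (c : K)
    (hc : algebraMap K (AdjoinRoot (X ^ n - C (algebraMap R K ((u : R) * π ^ r)))) c *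
      AdjoinRoot.root (X ^ n - C (algebraMap R K ((u : R) * π ^ r))) ∈ A) :
    ∃ ρ : R, algebraMap R K ρ = c :=
  stmt_1_general R K π hπ u n r hr A hA c hc
end
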